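/- arXiv:2102.03451 — 4 statements merged into one kernel-verified Lean document; each statement's English description precedes it below -/
import Mathlib

section
/- If (a,b,b+g) is a primitive Pythagorean triple with g a positive integer, then either g=m² for some odd integer m, or g=2m² for some positive integer m. -/
/-!
Since `a² = (b + g)² - b² = g (g + 2b)` and primitivity forces `gcd g b = 1`, the factor `g` is
coprime to `g + 2b` when `g` is odd, hence a square, necessarily of an odd number. When `g = 2h`
is even, `a = 2k` is even too and `k² = h (h + b)` with `gcd h (h + b) = 1`, so `h` is a square.
-/

namespace Nat

theorem exists_sq_of_coprime_of_mul_eq_sq {x y z : ℕ} (hxy : x.Coprime y) (h : x * y = z ^ 2) :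
    ∃ m, x = m ^ 2 :=
  exists_eq_pow_of_mul_eq_pow (Nat.isUnit_iff.mpr hxy) h

theorem sq_eq_mul_of_sq_add_sq_eq_sq_add {a b g : ℕ} (h : a ^ 2 + b ^ 2 = (b + g) ^ 2) :
    a ^ 2 = g * (g + 2 * b) := by
  have : (b + g) ^ 2 = b ^ 2 + g * (g + 2 * b) := by ring
  omega

theorem coprime_of_sq_eq_mul_of_gcd_eq_one {a b g : ℕ} (h : a ^ 2 = g * (g + 2 * b))
    (hprim : gcd (gcd a b) (b + g) = 1) : g.Coprime b := by
  set d := gcd g b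
  have hdg : d ∣ g := gcd_dvd_left g b
  have hdb : d ∣ b := gcd_dvd_right g b
  have hda : d ∣ a := by
    rw [← Nat.pow_dvd_pow_iff two_ne_zero, h, sq]
    exact mul_dvd_mul hdg (hdg.add (hdb.mul_left 2))
  exact Nat.eq_one_of_dvd_one (hprim ▸ dvd_gcd (dvd_gcd hda hdb) (hdb.add hdg))

theorem exists_odd_sq_of_odd {a b g : ℕ} (h : a ^ 2 = g * (g + 2 * b)) (hgb : g.Coprime b)
    (hg : Odd g) : ∃ m, Odd m ∧ g = m ^ 2 := by
  have hcop : g.Coprime (g + 2 * b) :=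
    coprime_self_add_right.mpr (hg.coprime_two_right.mul_right hgb)
  obtain ⟨m, rfl⟩ := exists_sq_of_coprime_of_mul_eq_sq hcop h.symm
  exact ⟨m, (Nat.odd_pow_iff two_ne_zero).mp hg, rfl⟩

theorem exists_two_mul_sq_of_even {a b g : ℕ} (h : a ^ 2 = g * (g + 2 * b)) (hgb : g.Coprime b)
    (hg : Even g) : ∃ m, g = 2 * m ^ 2 := by
  obtain ⟨k, rfl⟩ := hg
  rw [← two_mul] at h hgb ⊢
  obtain ⟨c, rfl⟩ : 2 ∣ a :=
    Nat.prime_two.dvd_of_dvd_pow (n := 2) ⟨k * (2 * k + 2 * b), by rw [h]; ring⟩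
  have hc : k * (k + b) = c ^ 2 := by
    refine Nat.eq_of_mul_eq_mul_left (show 0 < 4 by norm_num) ?_
    calc 4 * (k * (k + b)) = 2 * k * (2 * k + 2 * b) := by ring
      _ = (2 * c) ^ 2 := h.symm
      _ = 4 * c ^ 2 := by ring
  have hcop : k.Coprime (k + b) := coprime_self_add_right.mpr (Nat.Coprime.coprime_mul_left hgb)
  obtain ⟨m, rfl⟩ := exists_sq_of_coprime_of_mul_eq_sq hcop hc
  exact ⟨m, rfl⟩

end Nat

theorem stmt_1_general (a b g : ℕ) (hg : 0 < g)
    (hpyth : a ^ 2 + b ^ 2 = (b + g) ^ 2)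
    (hprim : Nat.gcd (Nat.gcd a b) (b + g) = 1) :
    (∃ m : ℕ, Odd m ∧ g = m ^ 2) ∨ (∃ m : ℕ, 0 < m ∧ g = 2 * m ^ 2) := by
  have h := Nat.sq_eq_mul_of_sq_add_sq_eq_sq_add hpyth
  have hgb := Nat.coprime_of_sq_eq_mul_of_gcd_eq_one h hprim
  rcases Nat.even_or_odd g with heven | hodd
  · obtain ⟨m, rfl⟩ := Nat.exists_two_mul_sq_of_even h hgb heven
    exact Or.inr ⟨m, pos_of_ne_zero (by rintro rfl; simp at hg), rfl⟩
  · exact Or.inl (Nat.exists_odd_sq_of_odd h hgb hodd)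

theorem stmt_1 (a b g : ℕ) (ha : 0 < a) (hb : 0 < b) (hg : 0 < g)
    (hpyth : a ^ 2 + b ^ 2 = (b + g) ^ 2)
    (hprim : Nat.gcd (Nat.gcd a b) (b + g) = 1) :
    (∃ m : ℕ, Odd m ∧ g = m ^ 2) ∨ (∃ m : ℕ, 0 < m ∧ g = 2 * m ^ 2) :=
  stmt_1_general a b g hg hpyth hprim
end

section
/- If (a,a+f,c) is a primitive Pythagorean triple and p is a prime dividing f, then p ≡ 1 (mod 8) or p ≡ -1 (mod 8). -/
/-!
Reducing the Pythagorean equation modulo `p ∣ f` gives `2 a² ≡ c²`, and primitivity makes `a`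
invertible modulo `p`, so `2` is a quadratic residue mod `p`. The second supplement to quadratic
reciprocity then gives `p ≡ ±1 (mod 8)` once `p = 2` is excluded: if `f` were even, `a` and
`a + f` would both be odd and `a² + (a + f)² ≡ 2 (mod 4)` could not be a square.
-/

theorem Nat.sq_add_sq_ne_sq_of_odd {x y : ℕ} (hx : Odd x) (hy : Odd y) (z : ℕ) :
    x ^ 2 + y ^ 2 ≠ z ^ 2 := by
  obtain ⟨k, rfl⟩ := hx
  obtain ⟨m, rfl⟩ := hy
  intro h
  rcases Nat.even_or_odd z with ⟨n, rfl⟩ | ⟨n, rfl⟩ <;> ring_nf at h <;> omega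

theorem Nat.Prime.not_dvd_of_sq_add_sq_of_gcd_eq_one {p a b c : ℕ} (hp : p.Prime)
    (h : a ^ 2 + b ^ 2 = c ^ 2) (hprim : Nat.gcd (Nat.gcd a b) c = 1) (ha : p ∣ a) :
    ¬ p ∣ b := by
  intro hb
  have hc : p ∣ c :=
    hp.dvd_of_dvd_pow <| h ▸ dvd_add (dvd_pow ha two_ne_zero) (dvd_pow hb two_ne_zero)
  exact hp.not_dvd_one <| hprim ▸ Nat.dvd_gcd (Nat.dvd_gcd ha hb) hc

theorem isSquare_two_of_two_mul_sq_eq_sq {K : Type*} [Field K] {x z : K} (hx : x ≠ 0)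
    (h : 2 * x ^ 2 = z ^ 2) : IsSquare (2 : K) :=
  ⟨z / x, by field_simp; linear_combination h⟩

theorem stmt_5_general (a f c : ℕ)
    (hpyth : a ^ 2 + (a + f) ^ 2 = c ^ 2)
    (hprim : Nat.gcd (Nat.gcd a (a + f)) c = 1)
    (p : ℕ) (hp : p.Prime) (hpf : p ∣ f) :
    p % 8 = 1 ∨ p % 8 = 7 := by
  have hpa : ¬ p ∣ a := fun hpa =>
    hp.not_dvd_of_sq_add_sq_of_gcd_eq_one hpyth hprim hpa (dvd_add hpa hpf)
  have hp2 : p ≠ 2 := by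
    rintro rfl
    have ha : Odd a := Nat.odd_iff.mpr (by omega)
    exact Nat.sq_add_sq_ne_sq_of_odd ha (ha.add_even (even_iff_two_dvd.mpr hpf)) c hpyth
  have : Fact p.Prime := ⟨hp⟩
  have hpyth_mod : 2 * (a : ZMod p) ^ 2 = (c : ZMod p) ^ 2 := by
    have := congrArg (Nat.cast : ℕ → ZMod p) hpyth
    push_cast [(ZMod.natCast_eq_zero_iff f p).mpr hpf] at this
    linear_combination this
  have ha0 : (a : ZMod p) ≠ 0 := mt (ZMod.natCast_eq_zero_iff a p).mp hpa
  exact (ZMod.exists_sq_eq_two_iff hp2).mp (isSquare_two_of_two_mul_sq_eq_sq ha0 hpyth_mod)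

theorem stmt_5 (a f c : ℕ) (ha : 0 < a) (hf : 0 < f) (hc : 0 < c)
    (hpyth : a ^ 2 + (a + f) ^ 2 = c ^ 2)
    (hprim : Nat.gcd (Nat.gcd a (a + f)) c = 1)
    (p : ℕ) (hp : p.Prime) (hpf : p ∣ f) :
    p % 8 = 1 ∨ p % 8 = 7 :=
  stmt_5_general a f c hpyth hprim p hp hpf
end

section
/- Let f be a prime with f ≡ ±1 (mod 8), and let 𝔲∈ℤ[√2] be a generator of a prime ideal above f (so N(𝔲)=±f). If X+Y√2 = ±(1+√2)(3+2√2)^m·𝔲² for some m∈ℤ with X>f>0 and Y>0, then a=(X-f)/2, b=(X+f)/2, c=Y are integers forming a primitive Pythagorean triple with b-a=f. -/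
/-!
Taking norms, `N(1 + √2) = -1` and `N(3 + 2√2) = 1` give `X² - 2Y² = -f²`, so `X` is odd and
`a² + b² = (X² + f²)/2 = Y²`. A common divisor of `a, b, c` divides `b - a = f`, so if the triple
were not primitive then `f ∣ X + Y√2`, hence `f ∣ 𝔲²`. As `f` is odd it is unramified in `ℤ√2`, so
`f ∣ 𝔲` and `f² ∣ N(𝔲) = ±f`, which is absurd.
-/

/-- The unit `3 + 2√2` of `ℤ√2`, with inverse `3 - 2√2`. -/
def deltaUnit : (ℤ√2)ˣ :=
  ⟨⟨3, 2⟩, ⟨3, -2⟩, by decide, by decide⟩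

namespace Zsqrtd

variable {d : ℤ}

theorem intCast_dvd_of_intCast_dvd_sq {p : ℤ} (hp : Prime p) (hp2 : ¬ p ∣ 2) (hpd : ¬ p ∣ d)
    {u : ℤ√d} (h : (p : ℤ√d) ∣ u ^ 2) : (p : ℤ√d) ∣ u := by
  rw [intCast_dvd] at h ⊢
  obtain ⟨hre, him⟩ := h
  simp only [sq, re_mul, im_mul] at hre him
  have him' : p ∣ 2 * (u.re * u.im) := by convert him using 1; ring
  have hre_im : p ∣ u.re ∨ p ∣ u.im := hp.dvd_or_dvd ((hp.dvd_or_dvd him').resolve_left hp2)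
  rcases hre_im with hr | hi
  · have : p ∣ d * (u.im * u.im) := by
      simpa [mul_assoc] using (dvd_sub hre (dvd_mul_of_dvd_left hr u.re))
    exact ⟨hr, (hp.dvd_or_dvd ((hp.dvd_or_dvd this).resolve_left hpd)).elim id id⟩
  · have : p ∣ u.re * u.re := by
      simpa using dvd_sub hre (dvd_mul_of_dvd_right hi (d * u.im))
    exact ⟨(hp.dvd_or_dvd this).elim id id, hi⟩

theorem not_intCast_dvd_sq {p : ℤ} (hp : Prime p) (hp2 : ¬ p ∣ 2) (hpd : ¬ p ∣ d)
    {u : ℤ√d} (hu : u.norm = p ∨ u.norm = -p) : ¬ (p : ℤ√d) ∣ u ^ 2 := by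
  intro h
  have hnorm : p * p ∣ u.norm := by
    simpa [normMonoidHom, norm_intCast] using
      map_dvd normMonoidHom (intCast_dvd_of_intCast_dvd_sq hp hp2 hpd h)
  have : p ∣ 1 := by
    rcases hu with hu | hu <;>
      exact (mul_dvd_mul_iff_left hp.ne_zero).mp (by simpa [hu] using hnorm)
  exact hp.not_isUnit (isUnit_of_dvd_one this)

end Zsqrtd

theorem norm_deltaUnit_zpow (m : ℤ) :
    Zsqrtd.norm ((deltaUnit ^ m : (ℤ√2)ˣ) : ℤ√2) = 1 := by
  have h : Units.map Zsqrtd.normMonoidHom deltaUnit = 1 := by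
    ext
    decide
  have hm : Units.map Zsqrtd.normMonoidHom (deltaUnit ^ m) = 1 := by rw [map_zpow, h, one_zpow]
  exact congrArg Units.val hm

section UnitTimesSquare

variable {x u : ℤ√2} {m : ℤ}

theorem sq_associated_of_eq_unit_mul_sq
    (h : x = ⟨1, 1⟩ * ((deltaUnit ^ m : (ℤ√2)ˣ) : ℤ√2) * u ^ 2 ∨
      x = -((⟨1, 1⟩ : ℤ√2) * ((deltaUnit ^ m : (ℤ√2)ˣ) : ℤ√2) * u ^ 2)) :
    Associated (u ^ 2) x := by
  have hunit : IsUnit ((⟨1, 1⟩ : ℤ√2) * ((deltaUnit ^ m : (ℤ√2)ˣ) : ℤ√2)) :=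
    (IsUnit.of_mul_eq_one (a := (⟨1, 1⟩ : ℤ√2)) ⟨-1, 1⟩ (by decide)).mul
      (Units.isUnit _)
  have hassoc := associated_mul_unit_right (u ^ 2) _ hunit
  rw [mul_comm] at hassoc
  rcases h with rfl | rfl
  · exact hassoc
  · exact hassoc.neg_right

theorem norm_eq_neg_norm_sq_of_eq_unit_mul_sq
    (h : x = ⟨1, 1⟩ * ((deltaUnit ^ m : (ℤ√2)ˣ) : ℤ√2) * u ^ 2 ∨
      x = -((⟨1, 1⟩ : ℤ√2) * ((deltaUnit ^ m : (ℤ√2)ˣ) : ℤ√2) * u ^ 2)) :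
    x.norm = -u.norm ^ 2 := by
  have h11 : Zsqrtd.norm (⟨1, 1⟩ : ℤ√2) = -1 := by decide
  rcases h with rfl | rfl <;>
    simp only [Zsqrtd.norm_neg, Zsqrtd.norm_mul, h11, norm_deltaUnit_zpow, pow_two] <;> ring

end UnitTimesSquare

theorem Int.gcd_gcd_eq_one_of_sub_eq_prime {a b c p : ℤ} (hp : Prime p) (hba : b - a = p)
    (h : ¬ (p ∣ a ∧ p ∣ c)) : Int.gcd (Int.gcd a b) c = 1 := by
  set g := Int.gcd (Int.gcd a b) c
  have hga : (g : ℤ) ∣ a := (Int.gcd_dvd_left _ _).trans (Int.gcd_dvd_left _ _)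
  have hgb : (g : ℤ) ∣ b := (Int.gcd_dvd_left _ _).trans (Int.gcd_dvd_right _ _)
  have hgc : (g : ℤ) ∣ c := Int.gcd_dvd_right _ _
  have hgp : g ∣ p.natAbs := Int.natCast_dvd.mp (hba ▸ dvd_sub hgb hga)
  rcases (Nat.dvd_prime (Int.prime_iff_natAbs_prime.mp hp)).mp hgp with hg | hg
  · exact hg
  · rw [hg] at hga hgc
    exact absurd ⟨Int.natAbs_dvd.mp hga, Int.natAbs_dvd.mp hgc⟩ h

theorem stmt_13_general (f : ℤ) (hf : Prime f) (hf8 : f % 8 = 1 ∨ f % 8 = 7)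
    (u : ℤ√2)
    (hunorm : Zsqrtd.norm u = f ∨ Zsqrtd.norm u = -f)
    (m : ℤ) (X Y : ℤ) (hXf : f < X) (hfpos : 0 < f) (hY : 0 < Y)
    (hXY : (⟨X, Y⟩ : ℤ√2) = (⟨1, 1⟩ : ℤ√2) * ((deltaUnit ^ m : (ℤ√2)ˣ) : ℤ√2) * u ^ 2 ∨
      (⟨X, Y⟩ : ℤ√2) = -((⟨1, 1⟩ : ℤ√2) * ((deltaUnit ^ m : (ℤ√2)ˣ) : ℤ√2) * u ^ 2)) :
    ∃ a b c : ℤ, 2 * a = X - f ∧ 2 * b = X + f ∧ c = Y ∧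
      0 < a ∧ 0 < b ∧ 0 < c ∧
      a ^ 2 + b ^ 2 = c ^ 2 ∧
      Int.gcd (Int.gcd a b) c = 1 ∧ b - a = f := by
  have hnorm : X ^ 2 - 2 * Y ^ 2 = -f ^ 2 := by
    have h := norm_eq_neg_norm_sq_of_eq_unit_mul_sq hXY
    rw [Zsqrtd.norm_def] at h
    rcases hunorm with hu | hu <;> rw [hu] at h <;> linear_combination h
  have hfodd : f % 2 = 1 := by omega
  have hXodd : Odd X := by
    have : Odd (X ^ 2) := by
      rw [show X ^ 2 = 2 * Y ^ 2 - f ^ 2 by linarith]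
      exact (even_two_mul _).sub_odd (Int.odd_iff.mpr hfodd).pow
    exact (Int.odd_pow.mp this).resolve_right two_ne_zero
  obtain ⟨a, ha⟩ : 2 ∣ X - f := even_iff_two_dvd.mp (hXodd.sub_odd (Int.odd_iff.mpr hfodd))
  have hf2 : ¬ f ∣ 2 := fun h => by have := Int.le_of_dvd two_pos h; have := hf.ne_one; omega
  have hXY_not_dvd : ¬ (f ∣ X ∧ f ∣ Y) := fun h =>
    Zsqrtd.not_intCast_dvd_sq hf hf2 hf2 hunorm
      (((Zsqrtd.intCast_dvd _ _).mpr h).trans (sq_associated_of_eq_unit_mul_sq hXY).symm.dvd)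
  refine ⟨a, a + f, Y, ha.symm, by omega, rfl, by omega, by omega, hY, ?_,
    Int.gcd_gcd_eq_one_of_sub_eq_prime hf (by ring) ?_, by ring⟩
  · have h4 : 4 * (a ^ 2 + (a + f) ^ 2) = 4 * Y ^ 2 := by
      linear_combination 2 * hnorm - 2 * (2 * a + f + X) * ha
    exact mul_left_cancel₀ four_ne_zero h4
  · rintro ⟨hfa, hfY⟩
    have hfX : f ∣ X := by
      rw [show X = 2 * a + f by omega]
      exact dvd_add (hfa.mul_left 2) dvd_rfl
    exact hXY_not_dvd ⟨hfX, hfY⟩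

theorem stmt_13 (f : ℤ) (hf : Prime f) (hf8 : f % 8 = 1 ∨ f % 8 = 7)
    (u : ℤ√2) (hu : Prime u) (hudvd : u ∣ (f : ℤ√2))
    (hunorm : Zsqrtd.norm u = f ∨ Zsqrtd.norm u = -f)
    (m : ℤ) (X Y : ℤ) (hXf : f < X) (hfpos : 0 < f) (hY : 0 < Y)
    (hXY : (⟨X, Y⟩ : ℤ√2) = (⟨1, 1⟩ : ℤ√2) * ((deltaUnit ^ m : (ℤ√2)ˣ) : ℤ√2) * u ^ 2 ∨
      (⟨X, Y⟩ : ℤ√2) = -((⟨1, 1⟩ : ℤ√2) * ((deltaUnit ^ m : (ℤ√2)ˣ) : ℤ√2) * u ^ 2)) :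
    ∃ a b c : ℤ, 2 * a = X - f ∧ 2 * b = X + f ∧ c = Y ∧
      0 < a ∧ 0 < b ∧ 0 < c ∧
      a ^ 2 + b ^ 2 = c ^ 2 ∧
      Int.gcd (Int.gcd a b) c = 1 ∧ b - a = f :=
  stmt_13_general f hf hf8 u hunorm m X Y hXf hfpos hY hXY
end

section
/- If (a,a+f,c) is a primitive Pythagorean triple with f prime, f≡±1 (mod 8), then there exist m∈ℤ, a choice of sign, and a generator 𝔲 of one of the prime ideals above f in ℤ[√2], such that 2a+f+c√2 = ±(1+√2)(3+2√2)^m·𝔲². -/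
open Zsqrtd

theorem Int.exists_eq_mul_add_two_mul_abs_le (a : ℤ) {n : ℤ} (hn : n ≠ 0) :
    ∃ q r : ℤ, a = n * q + r ∧ 2 * |r| ≤ |n| := by
  have hpos : 0 < n.natAbs := Int.natAbs_pos.mpr hn
  refine ⟨n.sign * a.bdiv n.natAbs, a.bmod n.natAbs, ?_, ?_⟩
  · rw [← mul_assoc, Int.mul_sign_self]
    exact (Int.bdiv_add_bmod a _).symm
  · have hlo := Int.le_bmod (x := a) hpos
    have hhi := Int.bmod_le (x := a) hpos
    rw [Int.abs_eq_natAbs, Int.abs_eq_natAbs]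
    omega

namespace Zsqrtd

variable {d : ℤ}

theorem exists_two_mul_abs_sub_intCast_mul_le (w : ℤ√d) {n : ℤ} (hn : n ≠ 0) :
    ∃ q : ℤ√d, 2 * |(w - n * q).re| ≤ |n| ∧ 2 * |(w - n * q).im| ≤ |n| := by
  obtain ⟨q₁, r₁, hre, hr₁⟩ := Int.exists_eq_mul_add_two_mul_abs_le w.re hn
  obtain ⟨q₂, r₂, him, hr₂⟩ := Int.exists_eq_mul_add_two_mul_abs_le w.im hn
  refine ⟨⟨q₁, q₂⟩, ?_, ?_⟩
  · simpa [hre] using hr₁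
  · simpa [him] using hr₂

theorem irreducible_of_natAbs_norm_prime {a : ℤ√d} (h : a.norm.natAbs.Prime) :
    Irreducible a := by
  refine ⟨fun hu => h.ne_one (norm_eq_one_iff.mpr hu), fun b c hbc => ?_⟩
  rw [hbc, norm_mul, Int.natAbs_mul, Nat.prime_mul_iff] at h
  rcases h with ⟨-, hc⟩ | ⟨-, hb⟩
  · exact Or.inr (norm_eq_one_iff.mp hc)
  · exact Or.inl (norm_eq_one_iff.mp hb)

theorem not_prime_intCast_of_dvd_sq_sub {p t : ℤ} (hp : ¬IsUnit p) (h : p ∣ t ^ 2 - d) :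
    ¬Prime (p : ℤ√d) := by
  intro hpr
  have hfactor : (⟨t, 1⟩ * ⟨t, -1⟩ : ℤ√d) = ((t ^ 2 - d : ℤ) : ℤ√d) := by
    ext <;> simp [sq, sub_eq_add_neg, add_comm]
  have hdvd : (p : ℤ√d) ∣ ⟨t, 1⟩ * ⟨t, -1⟩ := by
    rw [hfactor]
    exact (intCast_dvd_intCast _ _).mpr h
  rcases hpr.dvd_or_dvd hdvd with h1 | h1 <;> rw [intCast_dvd] at h1
  · exact hp (isUnit_of_dvd_one h1.2)
  · exact hp (isUnit_of_dvd_one (dvd_neg.mp h1.2))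

theorem exists_dvd_natAbs_norm_eq_of_not_irreducible {p : ℕ} (hp : p.Prime)
    (hpi : ¬Irreducible (p : ℤ√d)) : ∃ a : ℤ√d, a ∣ p ∧ a.norm.natAbs = p := by
  have hpu : ¬IsUnit (p : ℤ√d) := by
    rw [← norm_eq_one_iff, norm_natCast, Int.natAbs_mul, Int.natAbs_natCast, mul_eq_one]
    exact fun h => hp.ne_one h.1
  obtain ⟨a, b, hpab, hau, hbu⟩ : ∃ a b, (p : ℤ√d) = a * b ∧ ¬IsUnit a ∧ ¬IsUnit b := by
    simpa [irreducible_iff, hpu, not_forall, not_or] using hpi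
  refine ⟨a, ⟨b, hpab⟩, ((hp.mul_eq_prime_sq_iff (mt norm_eq_one_iff.1 hau)
    (mt norm_eq_one_iff.1 hbu)).1 ?_).1⟩
  rw [← Int.natAbs_mul, ← norm_mul, ← hpab, norm_natCast, Int.natAbs_mul, Int.natAbs_natCast, sq]

theorem associated_mul_star_of_natAbs_norm {x : ℤ√d} {p : ℕ} (hx : x.norm.natAbs = p) :
    Associated (x * star x) (p : ℤ√d) := by
  rw [← norm_eq_mul_conj, ← hx]
  have h := (Int.associated_natAbs x.norm).map (Int.castRingHom (ℤ√d))
  rwa [eq_intCast, eq_intCast, Int.cast_natCast] at h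

theorem dvd_or_star_dvd_of_dvd_mul_star {a z : ℤ√d} (ha : Prime a) (h : a ∣ z * star z) :
    a ∣ z ∨ star a ∣ z := by
  refine (ha.dvd_or_dvd h).imp id fun hz => ?_
  simpa [starRingEnd_apply] using map_dvd (starRingEnd (ℤ√d)) hz

end Zsqrtd

namespace ZsqrtdTwo

theorem two_ne_mul_self (n : ℤ) : 2 ≠ n * n := by
  intro h
  have : n ≤ 1 := by nlinarith
  have : -1 ≤ n := by nlinarith
  interval_cases n <;> omega

theorem norm_ne_zero {x : ℤ√2} (hx : x ≠ 0) : x.norm ≠ 0 :=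
  mt (norm_eq_zero two_ne_mul_self x).mp hx

theorem two_mul_abs_norm_le {x : ℤ√2} {n : ℤ} (hre : 2 * |x.re| ≤ |n|) (him : 2 * |x.im| ≤ |n|) :
    2 * |x.norm| ≤ |n| ^ 2 := by
  have hre2 : 4 * x.re ^ 2 ≤ |n| ^ 2 := by nlinarith [sq_abs x.re, abs_nonneg x.re]
  have him2 : 4 * x.im ^ 2 ≤ |n| ^ 2 := by nlinarith [sq_abs x.im, abs_nonneg x.im]
  rw [norm_def]
  rcases abs_cases (x.re * x.re - 2 * x.im * x.im) with ⟨h, -⟩ | ⟨h, -⟩ <;>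
    rw [h] <;> nlinarith [sq_nonneg x.re, sq_nonneg x.im]

theorem exists_natAbs_norm_sub_mul_lt (x : ℤ√2) {y : ℤ√2} (hy : y ≠ 0) :
    ∃ q : ℤ√2, (x - y * q).norm.natAbs < y.norm.natAbs := by
  have hn := norm_ne_zero hy
  obtain ⟨q, hre, him⟩ := exists_two_mul_abs_sub_intCast_mul_le (x * star y) hn
  refine ⟨q, ?_⟩
  have hmul : (x - y * q) * star y = x * star y - y.norm * q := by
    rw [norm_eq_mul_conj]; ring
  have hbound := two_mul_abs_norm_le hre him
  rw [← hmul, norm_mul, norm_conj, abs_mul, sq] at hbound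
  have hpos : 0 < |y.norm| := abs_pos.mpr hn
  zify
  nlinarith

noncomputable def quot (x y : ℤ√2) : ℤ√2 :=
  if hy : y = 0 then 0 else (exists_natAbs_norm_sub_mul_lt x hy).choose

noncomputable instance : EuclideanDomain (ℤ√2) :=
  { Zsqrtd.commRing, Zsqrtd.nontrivial with
    quotient := quot
    quotient_zero := fun _ => dif_pos rfl
    remainder := fun x y => x - y * quot x y
    quotient_mul_add_remainder_eq := fun _ _ => add_sub_cancel _ _
    r := fun x y => x.norm.natAbs < y.norm.natAbs
    r_wellFounded := (measure fun x : ℤ√2 => x.norm.natAbs).wf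
    remainder_lt := fun x y hy => by
      simp only [quot, dif_neg hy]
      exact (exists_natAbs_norm_sub_mul_lt x hy).choose_spec
    mul_left_not_lt := fun a b hb => by
      rw [not_lt, norm_mul, Int.natAbs_mul]
      exact Nat.le_mul_of_pos_right _ (Int.natAbs_pos.mpr (norm_ne_zero hb)) }

theorem prime_of_natAbs_norm_prime {a : ℤ√2} (h : a.norm.natAbs.Prime) : Prime a :=
  (irreducible_of_natAbs_norm_prime h).prime

theorem exists_dvd_natAbs_norm_eq {p : ℕ} (hp : p.Prime) (h8 : p % 8 = 1 ∨ p % 8 = 7) :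
    ∃ a : ℤ√2, a ∣ p ∧ a.norm.natAbs = p := by
  have := Fact.mk hp
  obtain ⟨y, hy⟩ := (ZMod.exists_sq_eq_two_iff (by omega)).mpr h8
  have hdvd : (p : ℤ) ∣ (y.val : ℤ) ^ 2 - 2 := by
    rw [← ZMod.intCast_zmod_eq_zero_iff_dvd]
    push_cast
    rw [ZMod.natCast_zmod_val, hy]
    ring
  have hpu : ¬IsUnit (p : ℤ) := by
    rw [Int.isUnit_iff_natAbs_eq, Int.natAbs_natCast]
    exact hp.ne_one
  have hnp := not_prime_intCast_of_dvd_sq_sub hpu hdvd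
  rw [Int.cast_natCast, ← irreducible_iff_prime] at hnp
  exact exists_dvd_natAbs_norm_eq_of_not_irreducible hp hnp

theorem exists_dvd_natAbs_norm_eq_and_dvd {p : ℕ} (hp : p.Prime) (h8 : p % 8 = 1 ∨ p % 8 = 7)
    {z : ℤ√2} (hz : (p : ℤ√2) ∣ z * star z) :
    ∃ u : ℤ√2, u ∣ p ∧ u.norm.natAbs = p ∧ u ∣ z := by
  obtain ⟨a, hap, hNa⟩ := exists_dvd_natAbs_norm_eq hp h8
  rcases dvd_or_star_dvd_of_dvd_mul_star (prime_of_natAbs_norm_prime (hNa ▸ hp))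
    (hap.trans hz) with haz | haz
  · exact ⟨a, hap, hNa, haz⟩
  · refine ⟨star a, ?_, by rwa [norm_conj], haz⟩
    simpa [starRingEnd_apply] using map_dvd (starRingEnd (ℤ√2)) hap

theorem exists_unit_mul_sq_of_dvd {p : ℕ} (hp : p.Prime) {u z : ℤ√2}
    (hNu : u.norm.natAbs = p) (huz : u ∣ z) (hNz : z.norm.natAbs = p ^ 2)
    (hpz : ¬(p : ℤ√2) ∣ z) : ∃ V : (ℤ√2)ˣ, z = V * u ^ 2 := by
  -- `z = u s` with `s` prime dividing `p ~ u ū`; `s ~ ū` would make `p` divide `z`.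
  obtain ⟨s, rfl⟩ := huz
  have hNs : s.norm.natAbs = p := by
    rw [norm_mul, Int.natAbs_mul, hNu, sq] at hNz
    exact Nat.eq_of_mul_eq_mul_left hp.pos hNz
  have hs : Prime s := prime_of_natAbs_norm_prime (hNs ▸ hp)
  have hsu : s ∣ u * star u := (dvd_mul_right s (star s)).trans
    ((associated_mul_star_of_natAbs_norm hNs).dvd.trans
      (associated_mul_star_of_natAbs_norm hNu).symm.dvd)
  rcases hs.dvd_or_dvd hsu with h | h
  · obtain ⟨V, rfl⟩ := hs.irreducible.associated_of_dvd
      (irreducible_of_natAbs_norm_prime (hNu ▸ hp)) h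
    exact ⟨V⁻¹, by linear_combination (-(s ^ 2 * (V : ℤ√2))) * V.inv_mul⟩
  · have hsu' := hs.irreducible.associated_of_dvd
      (irreducible_of_natAbs_norm_prime (by rwa [norm_conj, hNu])) h
    exact absurd ((hsu'.mul_left u).trans (associated_mul_star_of_natAbs_norm hNu)).symm.dvd hpz

theorem isFundamental_mk_three_two :
    Pell.IsFundamental (Pell.Solution₁.mk 3 2 (by norm_num) : Pell.Solution₁ 2) := by
  refine ⟨by simp, by simp, fun {b} hb => ?_⟩
  by_contra! h
  have hx : b.x = 2 := by rw [Pell.Solution₁.x_mk] at h; omega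
  have := b.prop
  rw [hx] at this
  omega

theorem coe_mk_three_two_zpow (n : ℤ) :
    (((Pell.Solution₁.mk 3 2 (by norm_num) : Pell.Solution₁ 2) ^ n : Pell.Solution₁ 2) : ℤ√2)
      = ((deltaUnit ^ n : (ℤ√2)ˣ) : ℤ√2) := by
  have h : Unitary.toUnits (R := ℤ√2) (Pell.Solution₁.mk 3 2 (by norm_num)) = deltaUnit :=
    Units.ext rfl
  rw [← h]
  exact congrArg Units.val
    (map_zpow (Unitary.toUnits (R := ℤ√2)) (Pell.Solution₁.mk 3 2 (by norm_num)) n)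

theorem eq_zpow_or_neg_zpow_of_norm_eq_one {w : ℤ√2} (hw : w.norm = 1) :
    ∃ n : ℤ, w = ((deltaUnit ^ n : (ℤ√2)ˣ) : ℤ√2) ∨ w = -((deltaUnit ^ n : (ℤ√2)ˣ) : ℤ√2) := by
  obtain ⟨n, hn⟩ := isFundamental_mk_three_two.eq_zpow_or_neg_zpow
    ⟨w, norm_eq_one_iff_mem_unitary.mp hw⟩
  refine ⟨n, hn.imp (fun h => ?_) (fun h => ?_)⟩
  · exact (congrArg Subtype.val h).trans (coe_mk_three_two_zpow n)
  · exact (congrArg Subtype.val h).trans (congrArg Neg.neg (coe_mk_three_two_zpow n))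

theorem eq_mul_zpow_or_neg_of_norm_eq_neg_one {v : ℤ√2} (hv : v.norm = -1) :
    ∃ m : ℤ, v = ⟨1, 1⟩ * ((deltaUnit ^ m : (ℤ√2)ˣ) : ℤ√2) ∨
      v = -(⟨1, 1⟩ * ((deltaUnit ^ m : (ℤ√2)ˣ) : ℤ√2)) := by
  have hε : (⟨-1, 1⟩ * ⟨1, 1⟩ : ℤ√2) = 1 := by decide
  obtain ⟨m, hm⟩ := eq_zpow_or_neg_zpow_of_norm_eq_one (w := v * ⟨-1, 1⟩)
    (by rw [norm_mul, hv]; rfl)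
  refine ⟨m, hm.imp (fun h => ?_) (fun h => ?_)⟩
  · linear_combination (⟨1, 1⟩ : ℤ√2) * h - v * hε
  · linear_combination (⟨1, 1⟩ : ℤ√2) * h - v * hε

end ZsqrtdTwo

theorem Int.not_dvd_two_mul_add_of_gcd_eq_one {a f c : ℤ} (hf : Prime f) (hf2 : ¬f ∣ 2)
    (hprim : Int.gcd (Int.gcd a (a + f)) c = 1) : ¬(f ∣ 2 * a + f ∧ f ∣ c) := by
  rintro ⟨h1, h2⟩
  have ha : f ∣ a := (hf.dvd_or_dvd (by simpa using dvd_sub h1 dvd_rfl)).resolve_left hf2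
  have h := Int.dvd_coe_gcd (Int.dvd_coe_gcd ha (dvd_add ha dvd_rfl)) h2
  rw [hprim] at h
  exact hf.not_isUnit (isUnit_of_dvd_one (by exact_mod_cast h))

open ZsqrtdTwo

theorem stmt_14_general (a f c : ℤ) (hf : 0 < f)
    (hfp : Prime f) (hf8 : f % 8 = 1 ∨ f % 8 = 7)
    (hpyth : a ^ 2 + (a + f) ^ 2 = c ^ 2)
    (hprim : Int.gcd (Int.gcd a (a + f)) c = 1) :
    ∃ (m : ℤ) (u : ℤ√2), Prime u ∧ u ∣ (f : ℤ√2) ∧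
      ((⟨2 * a + f, c⟩ : ℤ√2)
          = (⟨1, 1⟩ : ℤ√2) * ((deltaUnit ^ m : (ℤ√2)ˣ) : ℤ√2) * u ^ 2 ∨
        (⟨2 * a + f, c⟩ : ℤ√2)
          = -((⟨1, 1⟩ : ℤ√2) * ((deltaUnit ^ m : (ℤ√2)ˣ) : ℤ√2) * u ^ 2)) := by
  lift f to ℕ using hf.le
  have hp : f.Prime := Nat.prime_iff_prime_int.mpr hfp
  have h8 : f % 8 = 1 ∨ f % 8 = 7 := by omega
  set z : ℤ√2 := ⟨2 * a + f, c⟩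
  have hNz : z.norm = -(f : ℤ) ^ 2 := by
    rw [norm_def]
    linear_combination 2 * hpyth
  have hfz : ¬(f : ℤ√2) ∣ z := by
    rw [← Int.cast_natCast, intCast_dvd]
    refine Int.not_dvd_two_mul_add_of_gcd_eq_one hfp (fun h => ?_) hprim
    have := Nat.le_of_dvd two_pos (Int.natCast_dvd_natCast.mp h)
    have := hp.two_le
    omega
  have hfzz : (f : ℤ√2) ∣ z * star z := by
    rw [← norm_eq_mul_conj, hNz]
    exact ⟨-f, by push_cast; ring⟩
  obtain ⟨u, huf, hNu, huz⟩ := exists_dvd_natAbs_norm_eq_and_dvd hp h8 hfzz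
  obtain ⟨V, hV⟩ := exists_unit_mul_sq_of_dvd hp hNu huz (by simp [hNz]) hfz
  have hNV : (V : ℤ√2).norm = -1 := by
    have hf2 : (f : ℤ) ^ 2 ≠ 0 := by positivity
    have h := congrArg Zsqrtd.norm hV
    rw [Zsqrtd.norm_mul, sq, Zsqrtd.norm_mul, ← Int.natAbs_mul_self', hNu, hNz] at h
    exact mul_right_cancel₀ hf2 (by linear_combination -h)
  obtain ⟨m, hm⟩ := eq_mul_zpow_or_neg_of_norm_eq_neg_one hNV
  refine ⟨m, u, prime_of_natAbs_norm_prime (hNu ▸ hp), by simpa using huf, ?_⟩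
  rw [hV]
  rcases hm with h | h <;> rw [h]
  exacts [Or.inl rfl, Or.inr (by ring)]

theorem stmt_14 (a f c : ℤ) (ha : 0 < a) (hf : 0 < f) (hc : 0 < c)
    (hfp : Prime f) (hf8 : f % 8 = 1 ∨ f % 8 = 7)
    (hpyth : a ^ 2 + (a + f) ^ 2 = c ^ 2)
    (hprim : Int.gcd (Int.gcd a (a + f)) c = 1) :
    ∃ (m : ℤ) (u : ℤ√2), Prime u ∧ u ∣ (f : ℤ√2) ∧
      ((⟨2 * a + f, c⟩ : ℤ√2)
          = (⟨1, 1⟩ : ℤ√2) * ((deltaUnit ^ m : (ℤ√2)ˣ) : ℤ√2) * u ^ 2 ∨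
        (⟨2 * a + f, c⟩ : ℤ√2)
          = -((⟨1, 1⟩ : ℤ√2) * ((deltaUnit ^ m : (ℤ√2)ˣ) : ℤ√2) * u ^ 2)) :=
  stmt_14_general a f c hf hfp hf8 hpyth hprim
end
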